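/- arXiv:2112.12079 — 2 statements merged into one kernel-verified Lean document; each statement's English description precedes it below -/
import Mathlib

section
/- Let (R,v) be a discrete valuation domain and f = a_0 + a_1x + ... + a_nx^n in R[x] with v(a_n) = 0. Suppose there is an index s in {0,...,n-1} with m_i(f) < m_s(f) for all i ≠ s (where m_i(f) = (v(a_n)-v(a_i))/(n-i)) and that v(a_s) and n-s are coprime. Then in any factorization f = g·h in R[x], one of the factors has degree at most s; equivalently max(deg g, deg h) ≥ n - s. -/
/-!
Weight the coefficient `a_j` by `(n - s) v(a_j) + j v(a_s)`. This is constant along lines of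
slope `-v(a_s) / (n - s)`, and by the slope hypothesis its minimum over the coefficients of `f`
is attained exactly at `s` and at `n`. By the ultrametric inequality, the first and the last index
at which the weight of a product is minimal are the sums of the corresponding indices of the
factors. So for `f = g h` they split as `s = a + a'` and `n = deg g + deg h`, with `a`, `deg g`
minimizing for `g` and `a'`, `deg h` minimizing for `h`. Equal weights at `a'` and `deg h` make
`n - s` divide `(deg h - a') v(a_s)`, hence `deg h - a'`. Since
`(deg g - a) + (deg h - a') = n - s`, one of the two differences vanishes, so `deg g = a ≤ s` or
`deg h = a' ≤ s`.
-/

open Polynomial Finset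

section Minimizers

variable {Γ : Type*} [LinearOrder Γ]

def minimizers (w : ℕ → Γ) : Set ℕ := {j | ∀ i, w j ≤ w i}

variable {w : ℕ → Γ}

lemma lt_of_lt_of_isLeast_minimizers {a j : ℕ} (ha : IsLeast (minimizers w) a) (hj : j < a) :
    w a < w j := by
  by_contra! hle
  exact hj.not_ge (ha.2 fun i => hle.trans (ha.1 i))

lemma lt_of_isGreatest_minimizers_lt {b j : ℕ} (hb : IsGreatest (minimizers w) b) (hj : b < j) :
    w b < w j := by
  by_contra! hle
  exact hj.not_ge (hb.2 fun i => hle.trans (hb.1 i))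

variable [OrderTop Γ] {d : ℕ}

lemma exists_isLeast_minimizers (hd : ∀ j, d < j → w j = ⊤) :
    ∃ a, IsLeast (minimizers w) a := by
  obtain ⟨m, -, hm⟩ := (range (d + 1)).exists_min_image w nonempty_range_add_one
  refine ⟨_, isLeast_csInf ⟨m, fun j => ?_⟩⟩
  rcases le_or_gt j d with hj | hj
  · exact hm j (mem_range.2 (Nat.lt_succ_of_le hj))
  · exact (hd j hj).symm ▸ le_top

lemma exists_isGreatest_minimizers (hd : ∀ j, d < j → w j = ⊤) (hne : w d ≠ ⊤) :
    ∃ b, IsGreatest (minimizers w) b := by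
  obtain ⟨a, ha⟩ := exists_isLeast_minimizers hd
  refine BddAbove.exists_isGreatest_of_nonempty ⟨d, fun j hj => not_lt.1 fun hdj => ?_⟩ ⟨a, ha.1⟩
  exact hne (top_le_iff.1 (hd j hdj ▸ hj d))

end Minimizers

lemma add_lt_add_of_mem_minimizers {wg wh : ℕ → WithTop ℤ} {a b a' b' : ℕ}
    (ha : a ∈ minimizers wg) (hb : b ∈ minimizers wh) (hfin : wg a + wh b ≠ ⊤)
    (h : wg a < wg a' ∨ wh b < wh b') : wg a + wh b < wg a' + wh b' := by
  obtain ⟨hga, hhb⟩ := WithTop.add_ne_top.1 hfin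
  rcases h with h | h
  · exact WithTop.add_lt_add_of_lt_of_le hhb h (hb b')
  · exact WithTop.add_lt_add_of_le_of_lt hga (ha a') h

section SlopeWeight

variable {R : Type*} [CommRing R] (v : AddValuation R (WithTop ℤ)) (N y : ℤ)

/-- Its minimizers are the indices on the edge of slope `-y / N` of the Newton polygon of `P`. -/
def slopeWeight (P : R[X]) (j : ℕ) : WithTop ℤ :=
  (v (P.coeff j)).map fun t => N * t + j * y

variable {v N y}

lemma slopeWeight_of_coeff {P : R[X]} {j : ℕ} {t : ℤ} (ht : v (P.coeff j) = t) :
    slopeWeight v N y P j = ((N * t + j * y : ℤ) : WithTop ℤ) := by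
  rw [slopeWeight, ht, WithTop.map_coe]

lemma slopeWeight_eq_top_iff {P : R[X]} {j : ℕ} :
    slopeWeight v N y P j = ⊤ ↔ v (P.coeff j) = ⊤ :=
  WithTop.map_eq_top_iff

lemma slopeWeight_of_natDegree_lt {P : R[X]} {j : ℕ} (hj : P.natDegree < j) :
    slopeWeight v N y P j = ⊤ := by
  rw [slopeWeight_eq_top_iff, coeff_eq_zero_of_natDegree_lt hj, v.map_zero]

lemma le_natDegree_of_slopeWeight_ne_top {P : R[X]} {j : ℕ} (hj : slopeWeight v N y P j ≠ ⊤) :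
    j ≤ P.natDegree :=
  not_lt.1 fun h => hj (slopeWeight_of_natDegree_lt h)

lemma dvd_sub_of_mem_minimizers (hNy : IsCoprime N y) {P : R[X]} {i j : ℕ}
    (hi : i ∈ minimizers (slopeWeight v N y P)) (hj : j ∈ minimizers (slopeWeight v N y P))
    (hfin : slopeWeight v N y P i ≠ ⊤) : N ∣ (j : ℤ) - i := by
  have heq : slopeWeight v N y P i = slopeWeight v N y P j := le_antisymm (hi j) (hj i)
  obtain ⟨ti, hti⟩ := WithTop.ne_top_iff_exists.1 (mt slopeWeight_eq_top_iff.2 hfin)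
  obtain ⟨tj, htj⟩ := WithTop.ne_top_iff_exists.1 (mt slopeWeight_eq_top_iff.2 (heq ▸ hfin))
  rw [slopeWeight_of_coeff hti.symm, slopeWeight_of_coeff htj.symm, WithTop.coe_inj] at heq
  exact hNy.dvd_of_dvd_mul_right ⟨ti - tj, by linarith⟩

lemma slopeWeight_ne_top_of_mem_minimizers {P : R[X]} (hP : v P.leadingCoeff ≠ ⊤) {j : ℕ}
    (hj : j ∈ minimizers (slopeWeight v N y P)) : slopeWeight v N y P j ≠ ⊤ :=
  ne_top_of_le_ne_top (mt slopeWeight_eq_top_iff.1 hP) (hj P.natDegree)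

variable (v N y) in
lemma exists_isLeast_minimizers_slopeWeight (P : R[X]) :
    ∃ a, IsLeast (minimizers (slopeWeight v N y P)) a :=
  exists_isLeast_minimizers fun _ => slopeWeight_of_natDegree_lt

variable (N y) in
lemma exists_isGreatest_minimizers_slopeWeight {P : R[X]} (hP : v P.leadingCoeff ≠ ⊤) :
    ∃ b, IsGreatest (minimizers (slopeWeight v N y P)) b :=
  exists_isGreatest_minimizers (fun _ => slopeWeight_of_natDegree_lt)
    (mt slopeWeight_eq_top_iff.1 hP)

lemma strictMono_slopeWeight_map (hN : 0 < N) (j : ℕ) :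
    StrictMono (WithTop.map fun t : ℤ => N * t + j * y) :=
  WithTop.strictMono_map_iff.2 ((strictMono_mul_left_of_pos hN).add_const _)

lemma slopeWeight_add_slopeWeight (g h : R[X]) (a b : ℕ) :
    slopeWeight v N y g a + slopeWeight v N y h b =
      (v (g.coeff a * h.coeff b)).map fun t => N * t + ↑(a + b) * y := by
  rw [slopeWeight, slopeWeight, v.map_mul]
  induction v (g.coeff a) using WithTop.recTopCoe <;>
    induction v (h.coeff b) using WithTop.recTopCoe <;>
    simp only [WithTop.map_top, WithTop.map_coe, top_add, add_top, ← WithTop.coe_add]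
  rw [WithTop.coe_inj]
  push_cast
  ring

lemma exists_slopeWeight_add_le_slopeWeight_mul (hN : 0 < N) (g h : R[X]) (j : ℕ) :
    ∃ a b, a + b = j ∧
      slopeWeight v N y g a + slopeWeight v N y h b ≤ slopeWeight v N y (g * h) j := by
  obtain ⟨x, hx, hmin⟩ := (antidiagonal j).exists_min_image
    (fun x => v (g.coeff x.1 * h.coeff x.2)) ⟨(0, j), by simp⟩
  have hj : x.1 + x.2 = j := mem_antidiagonal.1 hx
  refine ⟨x.1, x.2, hj, ?_⟩
  rw [slopeWeight_add_slopeWeight, hj, slopeWeight, coeff_mul]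
  exact (strictMono_slopeWeight_map hN j).monotone (v.map_le_sum hmin)

lemma slopeWeight_mul_of_lt (hN : 0 < N) {g h : R[X]} {a b : ℕ}
    (hlt : ∀ a' b', a' + b' = a + b → (a', b') ≠ (a, b) →
      slopeWeight v N y g a + slopeWeight v N y h b <
        slopeWeight v N y g a' + slopeWeight v N y h b') :
    slopeWeight v N y (g * h) (a + b) = slopeWeight v N y g a + slopeWeight v N y h b := by
  classical
  have hmem : (a, b) ∈ antidiagonal (a + b) := mem_antidiagonal.2 rfl
  have hval : v ((g * h).coeff (a + b)) = v (g.coeff a * h.coeff b) := by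
    rw [coeff_mul]
    refine Valuation.map_sum_eq_of_lt v hmem fun x hx => ?_
    obtain ⟨hx, hne⟩ := mem_sdiff.1 hx
    have := hlt x.1 x.2 (mem_antidiagonal.1 hx) (by simpa using hne)
    rw [slopeWeight_add_slopeWeight, slopeWeight_add_slopeWeight, mem_antidiagonal.1 hx] at this
    exact (strictMono_slopeWeight_map hN _).lt_iff_lt.1 this
  rw [slopeWeight_add_slopeWeight, slopeWeight, hval]

lemma lt_slopeWeight_mul (hN : 0 < N) {g h : R[X]} {j : ℕ} {c : WithTop ℤ}
    (hc : ∀ a b, a + b = j → c < slopeWeight v N y g a + slopeWeight v N y h b) :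
    c < slopeWeight v N y (g * h) j := by
  obtain ⟨a, b, hab, hle⟩ := exists_slopeWeight_add_le_slopeWeight_mul hN g h j
  exact (hc a b hab).trans_le hle

lemma add_le_slopeWeight_mul (hN : 0 < N) {g h : R[X]} {a b : ℕ}
    (ha : a ∈ minimizers (slopeWeight v N y g)) (hb : b ∈ minimizers (slopeWeight v N y h))
    (j : ℕ) : slopeWeight v N y g a + slopeWeight v N y h b ≤ slopeWeight v N y (g * h) j := by
  obtain ⟨a', b', -, hle⟩ := exists_slopeWeight_add_le_slopeWeight_mul hN g h j
  exact (add_le_add (ha a') (hb b')).trans hle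

lemma isGreatest_minimizers_slopeWeight_mul (hN : 0 < N) {g h : R[X]} {b₁ b₂ : ℕ}
    (hg : IsGreatest (minimizers (slopeWeight v N y g)) b₁)
    (hh : IsGreatest (minimizers (slopeWeight v N y h)) b₂)
    (hfin : slopeWeight v N y g b₁ + slopeWeight v N y h b₂ ≠ ⊤) :
    IsGreatest (minimizers (slopeWeight v N y (g * h))) (b₁ + b₂) := by
  have hlt : ∀ a b, b₁ < a ∨ b₂ < b → slopeWeight v N y g b₁ + slopeWeight v N y h b₂ <
      slopeWeight v N y g a + slopeWeight v N y h b := fun a b hab =>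
    add_lt_add_of_mem_minimizers hg.1 hh.1 hfin
      (hab.imp (lt_of_isGreatest_minimizers_lt hg) (lt_of_isGreatest_minimizers_lt hh))
  have heq := slopeWeight_mul_of_lt hN fun a b hab hne => hlt a b (by
    by_contra! hle
    exact hne (Prod.ext (by omega) (by omega)))
  refine ⟨fun j => heq ▸ add_le_slopeWeight_mul hN hg.1 hh.1 j, fun j hj => not_lt.1 fun hj' => ?_⟩
  exact ((lt_slopeWeight_mul hN fun a b hab => hlt a b (by omega)).trans_le (hj _)).ne heq.symm

lemma isLeast_minimizers_slopeWeight_mul (hN : 0 < N) {g h : R[X]} {a₁ a₂ : ℕ}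
    (hg : IsLeast (minimizers (slopeWeight v N y g)) a₁)
    (hh : IsLeast (minimizers (slopeWeight v N y h)) a₂)
    (hfin : slopeWeight v N y g a₁ + slopeWeight v N y h a₂ ≠ ⊤) :
    IsLeast (minimizers (slopeWeight v N y (g * h))) (a₁ + a₂) := by
  have hlt : ∀ a b, a < a₁ ∨ b < a₂ → slopeWeight v N y g a₁ + slopeWeight v N y h a₂ <
      slopeWeight v N y g a + slopeWeight v N y h b := fun a b hab =>
    add_lt_add_of_mem_minimizers hg.1 hh.1 hfin
      (hab.imp (lt_of_lt_of_isLeast_minimizers hg) (lt_of_lt_of_isLeast_minimizers hh))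
  have heq := slopeWeight_mul_of_lt hN fun a b hab hne => hlt a b (by
    by_contra! hle
    exact hne (Prod.ext (by omega) (by omega)))
  refine ⟨fun j => heq ▸ add_le_slopeWeight_mul hN hg.1 hh.1 j, fun j hj => not_lt.1 fun hj' => ?_⟩
  exact ((lt_slopeWeight_mul hN fun a b hab => hlt a b (by omega)).trans_le (hj _)).ne heq.symm

lemma exists_isLeast_isGreatest_minimizers_of_mul (hN : 0 < N) {g h : R[X]}
    (hg : v g.leadingCoeff ≠ ⊤) (hh : v h.leadingCoeff ≠ ⊤) {s : ℕ}
    (hs : IsLeast (minimizers (slopeWeight v N y (g * h))) s)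
    (hn : IsGreatest (minimizers (slopeWeight v N y (g * h))) (g.natDegree + h.natDegree)) :
    ∃ a₁ a₂, a₁ + a₂ = s ∧
      IsLeast (minimizers (slopeWeight v N y g)) a₁ ∧
      IsGreatest (minimizers (slopeWeight v N y g)) g.natDegree ∧
      IsLeast (minimizers (slopeWeight v N y h)) a₂ ∧
      IsGreatest (minimizers (slopeWeight v N y h)) h.natDegree := by
  obtain ⟨a₁, ha₁⟩ := exists_isLeast_minimizers_slopeWeight v N y g
  obtain ⟨a₂, ha₂⟩ := exists_isLeast_minimizers_slopeWeight v N y h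
  obtain ⟨b₁, hb₁⟩ := exists_isGreatest_minimizers_slopeWeight N y hg
  obtain ⟨b₂, hb₂⟩ := exists_isGreatest_minimizers_slopeWeight N y hh
  have hfin {a b : ℕ} (ha : a ∈ minimizers (slopeWeight v N y g))
      (hb : b ∈ minimizers (slopeWeight v N y h)) :
      slopeWeight v N y g a + slopeWeight v N y h b ≠ ⊤ :=
    WithTop.add_ne_top.2
      ⟨slopeWeight_ne_top_of_mem_minimizers hg ha, slopeWeight_ne_top_of_mem_minimizers hh hb⟩
  have hb := (isGreatest_minimizers_slopeWeight_mul hN hb₁ hb₂ (hfin hb₁.1 hb₂.1)).unique hn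
  have hb₁g := le_natDegree_of_slopeWeight_ne_top (slopeWeight_ne_top_of_mem_minimizers hg hb₁.1)
  have hb₂h := le_natDegree_of_slopeWeight_ne_top (slopeWeight_ne_top_of_mem_minimizers hh hb₂.1)
  obtain rfl : b₁ = g.natDegree := by omega
  obtain rfl : b₂ = h.natDegree := by omega
  exact ⟨a₁, a₂, (isLeast_minimizers_slopeWeight_mul hN ha₁ ha₂ (hfin ha₁.1 ha₂.1)).unique hs,
    ha₁, hb₁, ha₂, hb₂⟩

lemma minimizers_slopeWeight_of_slope {f : R[X]} {n s : ℕ} {ys : ℤ} (hdeg : f.natDegree = n)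
    (hs : s < n) (hlead : v (f.coeff n) = 0) (hys : v (f.coeff s) = ys)
    (hslope : ∀ i < n, i ≠ s →
      (((n : ℤ) - i : ℤ) : WithTop ℤ) * v (f.coeff s)
        < (((n : ℤ) - s : ℤ) : WithTop ℤ) * v (f.coeff i)) :
    IsLeast (minimizers (slopeWeight v (n - s) ys f)) s ∧
      IsGreatest (minimizers (slopeWeight v (n - s) ys f)) n := by
  have hws : slopeWeight v (n - s) ys f s = (n * ys : ℤ) := by
    rw [slopeWeight_of_coeff hys]; ring_nf
  have hwn : slopeWeight v (n - s) ys f n = (n * ys : ℤ) := by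
    rw [slopeWeight_of_coeff (t := 0) (by rw [hlead]; rfl)]; ring_nf
  have hlt : ∀ j, j ≠ s → j ≠ n → ((n * ys : ℤ) : WithTop ℤ) < slopeWeight v (n - s) ys f j := by
    intro j hjs hjn
    rcases lt_or_gt_of_ne hjn with hj | hj
    · by_cases htop : v (f.coeff j) = ⊤
      · rw [slopeWeight_eq_top_iff.2 htop]; exact WithTop.coe_lt_top _
      obtain ⟨t, ht⟩ := WithTop.ne_top_iff_exists.1 htop
      have := hslope j hj hjs
      rw [hys, ← ht, ← WithTop.coe_mul, ← WithTop.coe_mul, WithTop.coe_lt_coe] at this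
      rw [slopeWeight_of_coeff ht.symm, WithTop.coe_lt_coe]
      linarith
    · rw [slopeWeight_of_natDegree_lt (hdeg ▸ hj)]; exact WithTop.coe_lt_top _
  have hle : ∀ j, ((n * ys : ℤ) : WithTop ℤ) ≤ slopeWeight v (n - s) ys f j := fun j => by
    by_cases hjs : j = s
    · rw [hjs, hws]
    by_cases hjn : j = n
    · rw [hjn, hwn]
    exact (hlt j hjs hjn).le
  refine ⟨⟨fun j => hws ▸ hle j, fun j hj => not_lt.1 fun hjs => ?_⟩,
    ⟨fun j => hwn ▸ hle j, fun j hj => not_lt.1 fun hjn => ?_⟩⟩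
  · exact (hlt j hjs.ne (by omega)).not_ge (hws ▸ hj s)
  · exact (hlt j (by omega) hjn.ne').not_ge (hwn ▸ hj n)

end SlopeWeight

/-- `hslope` is `mᵢ(f) < mₛ(f)` multiplied out by `(n - i)(n - s)`, using `v(aₙ) = 0`. -/
theorem factor_degree_of_coprime_general
    {R : Type*} [CommRing R] [IsDomain R]
    (v : AddValuation R (WithTop ℤ))
    (f : R[X]) (n s : ℕ) (hdeg : f.natDegree = n) (hs : s < n)
    (hlead : v (f.coeff n) = 0)
    (ys : ℤ) (hys : v (f.coeff s) = (ys : WithTop ℤ))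
    (hslope : ∀ i < n, i ≠ s →
      (((n : ℤ) - i : ℤ) : WithTop ℤ) * v (f.coeff s)
        < (((n : ℤ) - s : ℤ) : WithTop ℤ) * v (f.coeff i))
    (hcop : Int.gcd ys ((n : ℤ) - s) = 1) :
    ∀ g h : R[X], f = g * h →
      min g.natDegree h.natDegree ≤ s ∧ n - s ≤ max g.natDegree h.natDegree := by
  intro g h hgh
  have hN : (0 : ℤ) < n - s := by omega
  have hNy : IsCoprime ((n : ℤ) - s) ys := Int.isCoprime_iff_gcd_eq_one.2 (Int.gcd_comm _ _ ▸ hcop)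
  obtain ⟨hfs, hfn⟩ := minimizers_slopeWeight_of_slope hdeg hs hlead hys hslope
  have hf0 : g * h ≠ 0 := fun h0 => by simp [hgh, h0] at hlead
  have hpq : g.natDegree + h.natDegree = n := by
    rw [← natDegree_mul (left_ne_zero_of_mul hf0) (right_ne_zero_of_mul hf0), ← hgh, hdeg]
  have hlc : v g.leadingCoeff + v h.leadingCoeff = 0 := by
    rw [← v.map_mul, ← coeff_mul_degree_add_degree, ← hgh, hpq, hlead]
  obtain ⟨hgp, hhq⟩ := WithTop.add_ne_top.1 (hlc ▸ WithTop.zero_ne_top)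
  obtain ⟨a₁, a₂, ha, ha₁, hg₁, ha₂, hh₂⟩ := exists_isLeast_isGreatest_minimizers_of_mul hN
    hgp hhq (by rwa [← hgh]) (by rwa [← hgh, hpq])
  have hdvd := dvd_sub_of_mem_minimizers hNy ha₂.1 hh₂.1
    (slopeWeight_ne_top_of_mem_minimizers hhq ha₂.1)
  have ha₁g : a₁ ≤ g.natDegree := ha₁.2 hg₁.1
  have ha₂h : a₂ ≤ h.natDegree := ha₂.2 hh₂.1
  rcases ha₁g.eq_or_lt with hg | hg
  · omega
  · have := Int.eq_zero_of_dvd_of_nonneg_of_lt (by omega) (by omega) hdvd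
    omega

/-- If `v(aₙ) = 0`, `mᵢ(f) < mₛ(f)` for all `i ≠ s` (encoded as `(n-i)·v(aₛ) < (n-s)·v(aᵢ)`,
using `v(aₙ)=0`), and `v(aₛ)` is coprime to `n - s`, then any factorization `f = g·h` in
`R[x]` has a factor of degree at most `s`; equivalently `max(deg g, deg h) ≥ n - s`. -/
theorem factor_degree_of_coprime
    {R : Type*} [CommRing R] [IsDomain R]
    (v : AddValuation R (WithTop ℤ))
    (hdisc : ∀ m : ℤ, ∃ r : R, v r = (m : WithTop ℤ))
    (f : R[X]) (n s : ℕ) (hdeg : f.natDegree = n) (hs : s < n)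
    (hlead : v (f.coeff n) = 0)
    (ys : ℤ) (hys : v (f.coeff s) = (ys : WithTop ℤ))
    (hslope : ∀ i < n, i ≠ s →
      (((n : ℤ) - i : ℤ) : WithTop ℤ) * v (f.coeff s)
        < (((n : ℤ) - s : ℤ) : WithTop ℤ) * v (f.coeff i))
    (hcop : Int.gcd ys ((n : ℤ) - s) = 1) :
    ∀ g h : R[X], f = g * h →
      min g.natDegree h.natDegree ≤ s ∧ n - s ≤ max g.natDegree h.natDegree :=
  factor_degree_of_coprime_general v f n s hdeg hs hlead ys hys hslope hcop
end

section
/- Let (R,v) be a discrete valuation domain and f = a_0 + a_1x + ... + a_nx^n in R[x] with v(a_n) = 0. Suppose there is an index s in {0,...,n-1} with m_i(f) < m_s(f) for all i ≠ s, where m_i(f) = (v(a_n)-v(a_i))/(n-i), and set d_s = gcd(n-s, v(a_s)). Then any factorization f = g·h in R[x] satisfies max(deg g, deg h) ≥ (n-s)/d_s. -/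
/-!
Weight the coefficient `a_j` by `(n - s) v(a_j) + j v(a_s)`: up to the factor `n - s`, this is the
intercept of the line of slope `m_s` through the Newton polygon point `(j, v(a_j))`. The hypothesis
says that for `f` the minimal weight is attained exactly at `j = s` and `j = n`. Under
multiplication the minimal weights add, and so do the first and the last indices at which the
minimum is attained (Gauss's lemma for the weighted valuation). Hence the intervals `[a_g, b_g]`
and `[a_h, b_h]` of minimising indices of the factors have lengths adding up to `n - s`. Two
indices of equal weight differ by a multiple of `(n - s) / d_s`, so the factor whose interval is
not a point has degree at least `(n - s) / d_s`.
-/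

open Polynomial Finset

theorem WithTop.nsmul_eq_top_iff {α : Type*} [AddMonoid α] {c : ℕ} (hc : c ≠ 0)
    {y : WithTop α} : c • y = ⊤ ↔ y = ⊤ := by
  induction y with
  | top =>
    obtain ⟨c, rfl⟩ := Nat.exists_eq_succ_of_ne_zero hc
    simp [succ_nsmul]
  | coe x => simp [← WithTop.coe_nsmul]

theorem Nat.div_gcd_dvd_of_dvd_mul {c k m : ℕ} (hc : 0 < c) (h : c ∣ k * m) :
    c / c.gcd m ∣ k := by
  refine (Nat.coprime_div_gcd_div_gcd (Nat.gcd_pos_of_pos_left m hc)).dvd_of_dvd_mul_right ?_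
  rw [← Nat.mul_div_assoc k (Nat.gcd_dvd_right c m)]
  exact Nat.div_dvd_div (Nat.gcd_dvd_left c m) h

theorem Int.div_gcd_dvd_of_dvd_mul {c k : ℕ} {m : ℤ} (hc : 0 < c) (h : (c : ℤ) ∣ k * m) :
    c / Int.gcd c m ∣ k :=
  Nat.div_gcd_dvd_of_dvd_mul hc (by simpa [Int.natAbs_mul] using Int.natAbs_dvd_natAbs.mpr h)

theorem AddValuation.map_sum_eq_of_lt {R Γ₀ : Type*} [Ring R]
    [LinearOrderedAddCommMonoidWithTop Γ₀] (v : AddValuation R Γ₀) {ι : Type*}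
    [DecidableEq ι] {s : Finset ι} {f : ι → R} {j : ι}
    (hj : j ∈ s) (hf : ∀ i ∈ s \ {j}, v (f j) < v (f i)) :
    v (∑ i ∈ s, f i) = v (f j) := by
  rcases eq_or_ne (v (f j)) ⊤ with htop | htop
  · aesop
  rw [Finset.sum_eq_add_sum_sdiff_singleton_of_mem hj]
  exact v.map_add_eq_of_lt_left (v.map_lt_sum htop hf)

namespace Polynomial

variable {R : Type*} [CommRing R] (v : AddValuation R (WithTop ℤ)) (c : ℕ) (e : ℤ)

/-- `c` times the intercept at `0` of the line of slope `-e / c` through `(j, v (p.coeff j))`. -/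
def coeffWeight (p : R[X]) (j : ℕ) : WithTop ℤ :=
  c • v (p.coeff j) + ((j * e : ℤ) : WithTop ℤ)

variable {c} in
theorem coeffWeight_eq_top_iff (hc : c ≠ 0) {p : R[X]} {j : ℕ} :
    coeffWeight v c e p j = ⊤ ↔ v (p.coeff j) = ⊤ := by
  rw [coeffWeight, WithTop.add_eq_top, WithTop.nsmul_eq_top_iff hc]
  exact or_iff_left WithTop.coe_ne_top

theorem coeffWeight_of_val_eq {p : R[X]} {j : ℕ} {x : ℤ} (hx : v (p.coeff j) = x) :
    coeffWeight v c e p j = ((c * x + j * e : ℤ) : WithTop ℤ) := by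
  rw [coeffWeight, hx, ← WithTop.coe_nsmul, nsmul_eq_mul, ← WithTop.coe_add]

theorem coeffWeight_add_coeffWeight (g h : R[X]) (i k : ℕ) :
    coeffWeight v c e g i + coeffWeight v c e h k =
      c • v (g.coeff i * h.coeff k) + (((i + k : ℕ) * e : ℤ) : WithTop ℤ) := by
  rw [coeffWeight, coeffWeight, v.map_mul, nsmul_add, add_add_add_comm, ← WithTop.coe_add]
  congr 2
  push_cast
  ring

theorem exists_val_coeff_ne_top_of_mul_left {g h : R[X]}
    (hgh : ∃ m, v ((g * h).coeff m) ≠ ⊤) : ∃ i, v (g.coeff i) ≠ ⊤ := by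
  contrapose! hgh
  intro m
  rw [coeff_mul]
  refine top_le_iff.1 (v.map_le_sum fun x _ => ?_)
  rw [v.map_mul, hgh, top_add]

theorem exists_coeffWeight_add_le_coeffWeight_mul (g h : R[X]) (m : ℕ) :
    ∃ x ∈ antidiagonal m, coeffWeight v c e g x.1 + coeffWeight v c e h x.2 ≤
      coeffWeight v c e (g * h) m := by
  obtain ⟨x, hx, hmin⟩ := exists_mem_eq_inf' ⟨(0, m), mem_antidiagonal.2 (zero_add m)⟩
    fun x : ℕ × ℕ => v (g.coeff x.1 * h.coeff x.2)
  refine ⟨x, hx, ?_⟩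
  rw [coeffWeight_add_coeffWeight, mem_antidiagonal.1 hx, coeffWeight, coeff_mul, ← hmin]
  exact add_le_add (nsmul_le_nsmul_right (v.map_le_sum fun y hy =>
    inf'_le (fun x : ℕ × ℕ => v (g.coeff x.1 * h.coeff x.2)) hy) c) le_rfl

theorem coeffWeight_mul_eq {g h : R[X]} {m : ℕ} {x₀ : ℕ × ℕ}
    (hx₀ : x₀ ∈ antidiagonal m)
    (hlt : ∀ x ∈ antidiagonal m, x ≠ x₀ →
      coeffWeight v c e g x₀.1 + coeffWeight v c e h x₀.2 <
        coeffWeight v c e g x.1 + coeffWeight v c e h x.2) :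
    coeffWeight v c e (g * h) m = coeffWeight v c e g x₀.1 + coeffWeight v c e h x₀.2 := by
  have hmono : Monotone fun y : WithTop ℤ => c • y + ((m * e : ℤ) : WithTop ℤ) :=
    fun _ _ hy => add_le_add (nsmul_le_nsmul_right hy c) le_rfl
  rw [coeffWeight_add_coeffWeight, mem_antidiagonal.1 hx₀, coeffWeight, coeff_mul,
    v.map_sum_eq_of_lt hx₀]
  intro x hx
  rw [mem_sdiff, mem_singleton] at hx
  have hxx₀ := hlt x hx.1 hx.2
  rw [coeffWeight_add_coeffWeight, coeffWeight_add_coeffWeight, mem_antidiagonal.1 hx.1,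
    mem_antidiagonal.1 hx₀] at hxx₀
  exact hmono.reflect_lt hxx₀

/-- `[a, b]` is the horizontal extent of the face of the Newton polygon of `p` supported by a line
of slope `-e / c`, and `μ` is the `coeffWeight` of that line. -/
structure IsMinWeightSpan (p : R[X]) (μ : WithTop ℤ) (a b : ℕ) : Prop where
  ne_top : μ ≠ ⊤
  le : ∀ j, μ ≤ coeffWeight v c e p j
  eq_left : coeffWeight v c e p a = μ
  eq_right : coeffWeight v c e p b = μ
  lt : ∀ j, j < a ∨ b < j → μ < coeffWeight v c e p j

variable {v c e}

-- On a ring `v` may be `⊤` at nonzero elements, so `p ≠ 0` would not make the minimum finite.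
theorem exists_isMinWeightSpan (hc : c ≠ 0) {p : R[X]} (hp : ∃ j, v (p.coeff j) ≠ ⊤) :
    ∃ μ a b, IsMinWeightSpan v c e p μ a b := by
  classical
  have hrange : (range (p.natDegree + 1)).Nonempty := nonempty_range_add_one
  set μ := (range (p.natDegree + 1)).inf' hrange (coeffWeight v c e p)
  have mem_range_of_ne_top :
      ∀ j, coeffWeight v c e p j ≠ ⊤ → j ∈ range (p.natDegree + 1) :=
    fun j hj => mem_range_succ_iff.2 <| le_natDegree_of_ne_zero fun h0 => hj <| by
      rw [coeffWeight_eq_top_iff v e hc, h0, v.map_zero]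
  have hle : ∀ j, μ ≤ coeffWeight v c e p j := fun j => by
    by_cases hj : coeffWeight v c e p j = ⊤
    · exact hj ▸ le_top
    · exact inf'_le _ (mem_range_of_ne_top j hj)
  have hμ : μ ≠ ⊤ := by
    obtain ⟨j, hj⟩ := hp
    exact ne_top_of_le_ne_top (mt (coeffWeight_eq_top_iff v e hc).1 hj) (hle j)
  set T := (range (p.natDegree + 1)).filter (coeffWeight v c e p · = μ)
  obtain ⟨j₀, hj₀, hμj₀⟩ := exists_mem_eq_inf' hrange (coeffWeight v c e p)
  have hT : T.Nonempty := ⟨j₀, mem_filter.2 ⟨hj₀, hμj₀.symm⟩⟩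
  refine ⟨μ, T.min' hT, T.max' hT, hμ, hle, (mem_filter.1 (T.min'_mem hT)).2,
    (mem_filter.1 (T.max'_mem hT)).2, fun j hj => (hle j).lt_of_ne fun hjμ => ?_⟩
  have hjT : j ∈ T := mem_filter.2 ⟨mem_range_of_ne_top j (hjμ ▸ hμ), hjμ.symm⟩
  rcases hj with hj | hj
  · exact (T.min'_le j hjT).not_gt hj
  · exact (T.le_max' j hjT).not_gt hj

namespace IsMinWeightSpan

variable {p : R[X]} {μ : WithTop ℤ} {a b : ℕ}

theorem left_le_right (hp : IsMinWeightSpan v c e p μ a b) : a ≤ b :=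
  not_lt.1 fun hba => (hp.lt a (Or.inr hba)).ne hp.eq_left.symm

theorem right_le_natDegree (hc : c ≠ 0) (hp : IsMinWeightSpan v c e p μ a b) :
    b ≤ p.natDegree :=
  le_natDegree_of_ne_zero fun h0 => hp.ne_top <| by
    rw [← hp.eq_right, coeffWeight_eq_top_iff v e hc, h0, v.map_zero]

theorem unique {μ' : WithTop ℤ} {a' b' : ℕ} (hp : IsMinWeightSpan v c e p μ a b)
    (hp' : IsMinWeightSpan v c e p μ' a' b') : a = a' ∧ b = b' := by
  obtain rfl : μ = μ' := le_antisymm (hp'.eq_left ▸ hp.le a') (hp.eq_left ▸ hp'.le a)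
  refine ⟨le_antisymm ?_ ?_, le_antisymm ?_ ?_⟩ <;> refine not_lt.1 fun h => ?_
  · exact (hp.lt a' (.inl h)).ne hp'.eq_left.symm
  · exact (hp'.lt a (.inl h)).ne hp.eq_left.symm
  · exact (hp'.lt b (.inr h)).ne hp.eq_right.symm
  · exact (hp.lt b' (.inr h)).ne hp'.eq_right.symm

theorem mul {g h : R[X]} {ν : WithTop ℤ} {a' b' : ℕ} (hg : IsMinWeightSpan v c e g μ a b)
    (hh : IsMinWeightSpan v c e h ν a' b') :
    IsMinWeightSpan v c e (g * h) (μ + ν) (a + a') (b + b') := by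
  have lt_add : ∀ x : ℕ × ℕ, (x.1 < a ∨ b < x.1) ∨ (x.2 < a' ∨ b' < x.2) →
      μ + ν < coeffWeight v c e g x.1 + coeffWeight v c e h x.2
    | x, .inl hx => WithTop.add_lt_add_of_lt_of_le hh.ne_top (hg.lt _ hx) (hh.le _)
    | x, .inr hx => WithTop.add_lt_add_of_le_of_lt hg.ne_top (hg.le _) (hh.lt _ hx)
  have eq_at : ∀ i k, coeffWeight v c e g i = μ → coeffWeight v c e h k = ν →
      (∀ i' k', i' + k' = i + k → ¬(i' = i ∧ k' = k) →
        (i' < a ∨ b < i') ∨ (k' < a' ∨ b' < k')) →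
      coeffWeight v c e (g * h) (i + k) = μ + ν := by
    intro i k hi hk hout
    rw [coeffWeight_mul_eq v c e (x₀ := (i, k)) (HasAntidiagonal.mem_antidiagonal.2 rfl)
      fun x hx hne => ?_, hi, hk]
    rw [hi, hk]
    exact lt_add x (hout x.1 x.2 (HasAntidiagonal.mem_antidiagonal.1 hx) (Prod.ext_iff.not.1 hne))
  refine ⟨WithTop.add_ne_top.2 ⟨hg.ne_top, hh.ne_top⟩, fun m => ?_,
    eq_at _ _ hg.eq_left hh.eq_left fun _ _ _ _ => by omega,
    eq_at _ _ hg.eq_right hh.eq_right fun _ _ _ _ => by omega, fun m hm => ?_⟩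
  · obtain ⟨x, -, hx⟩ := exists_coeffWeight_add_le_coeffWeight_mul v c e g h m
    exact (add_le_add (hg.le _) (hh.le _)).trans hx
  · obtain ⟨x, hx, hle⟩ := exists_coeffWeight_add_le_coeffWeight_mul v c e g h m
    rw [HasAntidiagonal.mem_antidiagonal] at hx
    exact (lt_add x (by omega)).trans_le hle

theorem div_gcd_dvd (hc : c ≠ 0) (hp : IsMinWeightSpan v c e p μ a b) :
    c / Int.gcd c e ∣ b - a := by
  have val_coe : ∀ j, coeffWeight v c e p j = μ → ∃ x : ℤ, v (p.coeff j) = x := fun j hj =>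
    (WithTop.ne_top_iff_exists.1 fun htop =>
      hp.ne_top (hj ▸ (coeffWeight_eq_top_iff v e hc).2 htop)).imp fun _ => Eq.symm
  obtain ⟨x, hx⟩ := val_coe a hp.eq_left
  obtain ⟨y, hy⟩ := val_coe b hp.eq_right
  have hxy := hp.eq_left.trans hp.eq_right.symm
  rw [coeffWeight_of_val_eq v c e hx, coeffWeight_of_val_eq v c e hy, WithTop.coe_inj] at hxy
  refine Int.div_gcd_dvd_of_dvd_mul (Nat.pos_of_ne_zero hc) ⟨x - y, ?_⟩
  push_cast [hp.left_le_right]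
  linarith

theorem div_gcd_le_natDegree (hc : c ≠ 0) (hp : IsMinWeightSpan v c e p μ a b) (hab : a < b) :
    c / Int.gcd c e ≤ p.natDegree :=
  (Nat.le_of_dvd (Nat.sub_pos_of_lt hab) (hp.div_gcd_dvd hc)).trans
    ((Nat.sub_le b a).trans (hp.right_le_natDegree hc))

end IsMinWeightSpan

theorem isMinWeightSpan_of_slope {f : R[X]} {n s : ℕ} (hdeg : f.natDegree = n) (hs : s < n)
    (hlead : v (f.coeff n) = 0) {ys : ℤ} (hys : v (f.coeff s) = ys)
    (hslope : ∀ i < n, i ≠ s →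
      (((n : ℤ) - i : ℤ) : WithTop ℤ) * v (f.coeff s)
        < (((n : ℤ) - s : ℤ) : WithTop ℤ) * v (f.coeff i)) :
    IsMinWeightSpan v (n - s) ys f ((n * ys : ℤ) : WithTop ℤ) s n := by
  have hc : n - s ≠ 0 := by omega
  have at_n : coeffWeight v (n - s) ys f n = ((n * ys : ℤ) : WithTop ℤ) := by
    rw [coeffWeight_of_val_eq v _ ys (x := 0) hlead, mul_zero, zero_add]
  have at_s : coeffWeight v (n - s) ys f s = ((n * ys : ℤ) : WithTop ℤ) := by
    rw [coeffWeight_of_val_eq v _ ys hys, WithTop.coe_inj]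
    push_cast [hs.le]
    ring
  have above :
      ∀ j ≠ s, j ≠ n → ((n * ys : ℤ) : WithTop ℤ) < coeffWeight v (n - s) ys f j := by
    intro j hjs hjn
    by_cases htop : v (f.coeff j) = ⊤
    · rw [(coeffWeight_eq_top_iff v ys hc).2 htop]
      exact WithTop.coe_lt_top _
    obtain ⟨x, hx⟩ := WithTop.ne_top_iff_exists.1 htop
    have hj : j < n := (Nat.lt_or_gt_of_ne hjn).resolve_right fun hj => htop <| by
      rw [coeff_eq_zero_of_natDegree_lt (hdeg ▸ hj), v.map_zero]
    have hslope_j := hslope j hj hjs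
    rw [hys, ← hx, ← WithTop.coe_mul, ← WithTop.coe_mul, WithTop.coe_lt_coe] at hslope_j
    rw [coeffWeight_of_val_eq v _ ys hx.symm, WithTop.coe_lt_coe]
    push_cast [hs.le]
    linarith
  refine ⟨WithTop.coe_ne_top, fun j => ?_, at_s, at_n,
    fun j hj => above j (by omega) (by omega)⟩
  by_cases hjs : j = s
  · exact hjs ▸ at_s.ge
  by_cases hjn : j = n
  · exact hjn ▸ at_n.ge
  exact (above j hjs hjn).le

end Polynomial

theorem max_degree_ge_general
    {R : Type*} [CommRing R]
    (v : AddValuation R (WithTop ℤ))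
    (f : R[X]) (n s : ℕ) (hdeg : f.natDegree = n) (hs : s < n)
    (hlead : v (f.coeff n) = 0)
    (ys : ℤ) (hys : v (f.coeff s) = (ys : WithTop ℤ))
    (hslope : ∀ i < n, i ≠ s →
      (((n : ℤ) - i : ℤ) : WithTop ℤ) * v (f.coeff s)
        < (((n : ℤ) - s : ℤ) : WithTop ℤ) * v (f.coeff i)) :
    ∀ g h : R[X], f = g * h →
      (n - s) / Int.gcd ((n : ℤ) - s) ys ≤ max g.natDegree h.natDegree := by
  rintro g h rfl
  have hc : n - s ≠ 0 := by omega
  have hf := isMinWeightSpan_of_slope hdeg hs hlead hys hslope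
  have hfin : ∃ m, v ((g * h).coeff m) ≠ ⊤ := ⟨n, by simp [hlead]⟩
  obtain ⟨μ, a, b, hg⟩ := exists_isMinWeightSpan hc
    (exists_val_coeff_ne_top_of_mul_left v hfin)
  obtain ⟨ν, a', b', hh⟩ := exists_isMinWeightSpan hc
    (exists_val_coeff_ne_top_of_mul_left v (h := g) (mul_comm g h ▸ hfin))
  obtain ⟨hs', hn'⟩ := (hg.mul hh).unique hf
  rw [show (n : ℤ) - s = ((n - s : ℕ) : ℤ) by omega]
  have hab_g := hg.left_le_right
  have hab_h := hh.left_le_right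
  rcases Nat.lt_or_ge a b with hab | hab
  · exact (hg.div_gcd_le_natDegree hc hab).trans (le_max_left _ _)
  · exact (hh.div_gcd_le_natDegree hc (by omega)).trans (le_max_right _ _)

/-- **Theorem 2.** If `v(aₙ) = 0` and `mᵢ(f) < mₛ(f)` for all `i ≠ s` (encoded as
`(n-i)·v(aₛ) < (n-s)·v(aᵢ)`, using `v(aₙ)=0`), and `dₛ = gcd(n-s, v(aₛ))`, then any
factorization `f = g·h` in `R[x]` satisfies `max(deg g, deg h) ≥ (n-s)/dₛ`. -/
theorem max_degree_ge
    {R : Type*} [CommRing R] [IsDomain R]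
    (v : AddValuation R (WithTop ℤ))
    (hdisc : ∀ m : ℤ, ∃ r : R, v r = (m : WithTop ℤ))
    (f : R[X]) (n s : ℕ) (hdeg : f.natDegree = n) (hs : s < n)
    (hlead : v (f.coeff n) = 0)
    (ys : ℤ) (hys : v (f.coeff s) = (ys : WithTop ℤ))
    (hslope : ∀ i < n, i ≠ s →
      (((n : ℤ) - i : ℤ) : WithTop ℤ) * v (f.coeff s)
        < (((n : ℤ) - s : ℤ) : WithTop ℤ) * v (f.coeff i)) :
    ∀ g h : R[X], f = g * h →
      (n - s) / Int.gcd ((n : ℤ) - s) ys ≤ max g.natDegree h.natDegree :=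
  max_degree_ge_general v f n s hdeg hs hlead ys hys hslope
end
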